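/- arXiv:2012.05449 — 3 statements merged into one kernel-verified Lean document; each statement's English description precedes it below -/
import Mathlib

section
/- Convex-decomposition product identity: let Π be an m×m matrix with nonnegative entries, identical rows, and row sums 1, and let P_{k_0}, …, P_n be Markov (row-stochastic) matrices such that Π P_k = Π and P_k ≥ δ_k Π entrywise with 0 ≤ δ_k < 1 for each k. Set α_k = 1 − δ_k and P̃_k = (P_k − δ_k Π)/α_k. Then P_{k_0} P_{k_0+1} ⋯ P_n = (∏_{k=k_0}^{n} α_k) · P̃_{k_0} P̃_{k_0+1} ⋯ P̃_n + (1 − ∏_{k=k_0}^{n} α_k) · Π. -/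
open Matrix BigOperators

/-- `Mprod P s n = P_s · P_{s+1} ⋯ P_n` (ordered matrix product; identity if `n < s`). -/
noncomputable def Mprod (m : ℕ) (P : ℕ → Matrix (Fin m) (Fin m) ℝ) (s n : ℕ) :
    Matrix (Fin m) (Fin m) ℝ :=
  ((List.range (n + 1 - s)).map (fun k => P (s + k))).prod

/-- A row-stochastic (Markov) matrix: nonnegative entries, each row summing to 1. -/
def IsStochastic {m : ℕ} (P : Matrix (Fin m) (Fin m) ℝ) : Prop :=
  (∀ i j, 0 ≤ P i j) ∧ ∀ i, ∑ j, P i j = 1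


lemma rowsum_mul {m : ℕ} {A B : Matrix (Fin m) (Fin m) ℝ}
    (hA : ∀ i, ∑ j, A i j = 1) (hB : ∀ i, ∑ j, B i j = 1) (i : Fin m) :
    ∑ j, (A * B) i j = 1 := by
  simp only [Matrix.mul_apply]
  rw [Finset.sum_comm]
  simp only [← Finset.mul_sum, hB, mul_one]
  exact hA i

lemma mul_pi {m : ℕ} {A Pi : Matrix (Fin m) (Fin m) ℝ}
    (hA : ∀ i, ∑ j, A i j = 1) (hPi : ∀ i i' j, Pi i j = Pi i' j) :
    A * Pi = Pi := by
  ext i j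
  simp only [Matrix.mul_apply]
  calc ∑ k, A i k * Pi k j = ∑ k, A i k * Pi i j :=
        Finset.sum_congr rfl fun k _ => by rw [hPi k i j]
    _ = Pi i j := by rw [← Finset.sum_mul, hA i, one_mul]

lemma Mprod_self (m : ℕ) (P : ℕ → Matrix (Fin m) (Fin m) ℝ) (s : ℕ) :
    Mprod m P s s = P s := by
  have h : s + 1 - s = 1 := by omega
  rw [Mprod, h]
  simp [List.range_succ]

lemma Mprod_succ (m : ℕ) (P : ℕ → Matrix (Fin m) (Fin m) ℝ) (s n : ℕ) (h : s ≤ n + 1) :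
    Mprod m P s (n + 1) = Mprod m P s n * P (n + 1) := by
  have h1 : n + 1 + 1 - s = (n + 1 - s) + 1 := by omega
  have h2 : s + (n + 1 - s) = n + 1 := by omega
  rw [Mprod, Mprod, h1, List.range_succ, List.map_append, List.prod_append]
  simp [h2]

lemma Mprod_rowsum {m : ℕ} (P : ℕ → Matrix (Fin m) (Fin m) ℝ) (s n : ℕ) (hsn : s ≤ n)
    (h : ∀ k ∈ Finset.Icc s n, ∀ i, ∑ j, P k i j = 1) :
    ∀ i, ∑ j, Mprod m P s n i j = 1 := by
  induction n, hsn using Nat.le_induction with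
  | base => rw [Mprod_self]; exact h s (by simp)
  | succ n hsn ih =>
    rw [Mprod_succ _ _ _ _ (by omega)]
    exact rowsum_mul
      (ih fun k hk => h k (Finset.Icc_subset_Icc_right (by omega) hk))
      (h (n + 1) (Finset.mem_Icc.mpr ⟨by omega, le_refl _⟩))

/-- convex-decomposition product identity: with `α_k = 1 − δ_k` and
`P̃_k = (P_k − δ_k Π)/α_k`, one has
`P_{k₀} ⋯ P_n = (∏ α_k) · P̃_{k₀} ⋯ P̃_n + (1 − ∏ α_k) · Π`. -/
theorem stmt4 (m : ℕ) (Pi : Matrix (Fin m) (Fin m) ℝ)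
    (hPiNonneg : ∀ i j, 0 ≤ Pi i j)
    (hPiRows : ∀ i i' j, Pi i j = Pi i' j)
    (hPiSum : ∀ i, ∑ j, Pi i j = 1)
    (P : ℕ → Matrix (Fin m) (Fin m) ℝ) (δ : ℕ → ℝ)
    (k0 n : ℕ) (hk0n : k0 ≤ n)
    (hP : ∀ k ∈ Finset.Icc k0 n, IsStochastic (P k))
    (hδ : ∀ k ∈ Finset.Icc k0 n, 0 ≤ δ k ∧ δ k < 1)
    (hInv : ∀ k ∈ Finset.Icc k0 n, Pi * P k = Pi)
    (hLower : ∀ k ∈ Finset.Icc k0 n, ∀ i j, δ k * Pi i j ≤ P k i j) :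
    Mprod m P k0 n =
      (∏ k ∈ Finset.Icc k0 n, (1 - δ k)) •
          Mprod m (fun k => (1 - δ k)⁻¹ • (P k - δ k • Pi)) k0 n +
        (1 - ∏ k ∈ Finset.Icc k0 n, (1 - δ k)) • Pi := by
  induction n, hk0n using Nat.le_induction with
  | base =>
    have hδ0 := hδ k0 (by simp)
    have hα : (1 : ℝ) - δ k0 ≠ 0 := by linarith [hδ0.2]
    simp only [Finset.Icc_self, Finset.prod_singleton, Mprod_self]
    rw [smul_smul, mul_inv_cancel₀ hα, one_smul]
    have h1 : (1 : ℝ) - (1 - δ k0) = δ k0 := by ring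
    rw [h1, sub_add_cancel]
  | succ n hk0n ih =>
    have hsub : Finset.Icc k0 n ⊆ Finset.Icc k0 (n + 1) :=
      Finset.Icc_subset_Icc_right (by omega)
    have hmem : n + 1 ∈ Finset.Icc k0 (n + 1) := Finset.mem_Icc.mpr ⟨by omega, le_refl _⟩
    have hδ1 := hδ (n + 1) hmem
    have hα1 : (1 : ℝ) - δ (n + 1) ≠ 0 := by linarith [hδ1.2]
    have hPiPi : Pi * Pi = Pi := mul_pi hPiSum hPiRows
    -- row sums of the tilde matrices are 1
    have hTrow : ∀ k ∈ Finset.Icc k0 (n + 1), ∀ i,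
        ∑ j, ((1 - δ k)⁻¹ • (P k - δ k • Pi)) i j = 1 := by
      intro k hk i
      have hδk := hδ k hk
      have hαk : (1 : ℝ) - δ k ≠ 0 := by linarith [hδk.2]
      have hs : ∑ j, (P k i j - δ k * Pi i j) = 1 - δ k := by
        rw [Finset.sum_sub_distrib, (hP k hk).2 i, ← Finset.mul_sum, hPiSum i, mul_one]
      simp only [Matrix.smul_apply, Matrix.sub_apply, smul_eq_mul]
      rw [← Finset.mul_sum, hs, inv_mul_cancel₀ hαk]
    have hQPi : Mprod m (fun k => (1 - δ k)⁻¹ • (P k - δ k • Pi)) k0 n * Pi = Pi :=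
      mul_pi (Mprod_rowsum _ k0 n hk0n (fun k hk => hTrow k (hsub hk))) hPiRows
    rw [Mprod_succ _ _ _ _ (by omega), Mprod_succ _ _ _ _ (by omega),
      Finset.prod_Icc_succ_top (by omega : k0 ≤ n + 1),
      ih (fun k hk => hP k (hsub hk)) (fun k hk => hδ k (hsub hk))
        (fun k hk => hInv k (hsub hk)) (fun k hk => hLower k (hsub hk))]
    beta_reduce
    set T := (1 - δ (n + 1))⁻¹ • (P (n + 1) - δ (n + 1) • Pi) with hT
    have hPiT : Pi * T = Pi := by
      rw [hT, Matrix.mul_smul, Matrix.mul_sub, hInv (n + 1) hmem, Matrix.mul_smul, hPiPi]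
      rw [show Pi - δ (n + 1) • Pi = (1 - δ (n + 1)) • Pi by rw [sub_smul, one_smul]]
      rw [smul_smul, inv_mul_cancel₀ hα1, one_smul]
    have hPdec : P (n + 1) = (1 - δ (n + 1)) • T + δ (n + 1) • Pi := by
      rw [hT, smul_smul, mul_inv_cancel₀ hα1, one_smul, sub_add_cancel]
    nth_rewrite 1 [hPdec]
    simp only [Matrix.add_mul, Matrix.mul_add, Matrix.smul_mul, Matrix.mul_smul,
      smul_smul, hQPi, hPiT, hPiPi]
    module
end

section
/- Deterministic coherent-segment estimate: let ζ > 0, let G be an m×m Hermitian matrix, and let U_n = exp(i·n^{−ζ/2}·G). Let s < t be positive integers such that (s+1)^{ζ/2} ≥ 4‖G‖_∞. Then for all i ≠ j, |⟨j| U_t U_{t−1} ⋯ U_{s+1} |i⟩|² ≤ 4·(m−1)²·(t−s)²·‖G‖_∞² / (s+1)^ζ. -/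
open Matrix BigOperators

/-- The operator norm of a matrix acting on `(ℂ^m, ‖·‖_∞)`: the maximum row sum of
absolute values of entries. -/
noncomputable def infNorm {m : ℕ} (G : Matrix (Fin m) (Fin m) ℂ) : ℝ :=
  ⨆ j, ∑ k, ‖G j k‖

/-- `Uprod U s t = U_t · U_{t-1} ⋯ U_{s+1}` (the identity if `t ≤ s`). -/
noncomputable def Uprod (m : ℕ) (U : ℕ → Matrix (Fin m) (Fin m) ℂ) (s : ℕ) :
    ℕ → Matrix (Fin m) (Fin m) ℂ
  | 0 => 1
  | (t + 1) => if t + 1 ≤ s then 1 else U (t + 1) * Uprod m U s t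

/-! The entry `(j, i)` of `U_t ⋯ U_{s+1} - 1` vanishes for the empty product, and multiplying by
`U_n` changes it by an entry of `(U_n - 1) Q`, where the unitary `Q` has entries of modulus at
most `1`; so each step costs at most `‖U_n - 1‖_∞`. As `n^{-ζ/2} ≤ (s+1)^{-ζ/2}` for `n > s` and
`‖exp x - 1‖ ≤ 2‖x‖` once `‖x‖ ≤ 1`, that cost is at most `2‖G‖_∞ / (s+1)^{ζ/2}`; squaring the
sum of the `t - s` steps gives the bound, already without the factor `(m-1)² ≥ 1`. -/

open NormedSpace
open scoped Nat

theorem norm_exp_sub_one_le_real_exp_sub_one {𝔸 : Type*} [NormedRing 𝔸] [NormedAlgebra ℚ 𝔸]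
    [CompleteSpace 𝔸] (x : 𝔸) : ‖exp x - 1‖ ≤ Real.exp ‖x‖ - 1 := by
  have hx := (exp_series_hasSum_exp' (𝕂 := ℚ) x).sub (hasSum_ite_eq 0 (1 : 𝔸))
  have hr := (expSeries_div_hasSum_exp ‖x‖).sub (hasSum_ite_eq 0 (1 : ℝ))
  rw [← Real.exp_eq_exp_ℝ] at hr
  refine hx.norm_le_of_bounded hr fun n => ?_
  rcases n with _ | n
  · simp
  · simp only [Nat.succ_ne_zero, if_false, sub_zero]
    calc ‖((n + 1)! : ℚ)⁻¹ • x ^ (n + 1)‖ ≤ ‖((n + 1)! : ℚ)⁻¹‖ * ‖x‖ ^ (n + 1) :=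
          (norm_smul_le _ _).trans (by gcongr; exact norm_pow_le' x n.succ_pos)
      _ = ‖x‖ ^ (n + 1) / (n + 1)! := by
          rw [norm_inv, div_eq_inv_mul, ← Rat.norm_cast_real]; simp

theorem norm_exp_sub_one_le {𝔸 : Type*} [NormedRing 𝔸] [NormedAlgebra ℚ 𝔸] [CompleteSpace 𝔸]
    {x : 𝔸} (hx : ‖x‖ ≤ 1) : ‖exp x - 1‖ ≤ 2 * ‖x‖ := by
  have h := Real.abs_exp_sub_one_le (x := ‖x‖) (by rwa [abs_norm])
  rw [abs_norm] at h
  exact (norm_exp_sub_one_le_real_exp_sub_one x).trans ((le_abs_self _).trans h)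

theorem Matrix.exp_mem_unitaryGroup {𝕜 n : Type*} [RCLike 𝕜] [Fintype n] [DecidableEq n]
    {A : Matrix n n 𝕜} (hA : A ∈ skewAdjoint (Matrix n n 𝕜)) : exp A ∈ unitaryGroup n 𝕜 := by
  rw [mem_unitaryGroup_iff', star_eq_conjTranspose, ← exp_conjTranspose, ← star_eq_conjTranspose,
    skewAdjoint.mem_iff.mp hA, ← Matrix.exp_add_of_commute _ _ (Commute.refl A).neg_left,
    neg_add_cancel, exp_zero]

theorem Matrix.IsHermitian.I_mul_smul_mem_skewAdjoint {n : Type*} {G : Matrix n n ℂ}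
    (hG : G.IsHermitian) (r : ℝ) : (Complex.I * r) • G ∈ skewAdjoint (Matrix n n ℂ) := by
  rw [← smul_smul]
  exact IsSelfAdjoint.smul_mem_skewAdjoint (by simp [skewAdjoint.mem_iff])
    (IsSelfAdjoint.smul (Complex.conj_ofReal r) hG.isSelfAdjoint)

section Uprod

variable {m : ℕ} {U : ℕ → Matrix (Fin m) (Fin m) ℂ} {s t : ℕ}

theorem Uprod_of_le (h : t ≤ s) : Uprod m U s t = 1 := by
  cases t with
  | zero => rfl
  | succ t => rw [Uprod, if_pos h]

theorem Uprod_succ_of_le (h : s ≤ t) : Uprod m U s (t + 1) = U (t + 1) * Uprod m U s t := by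
  rw [Uprod, if_neg (by omega)]

theorem Uprod_mem {S : Submonoid (Matrix (Fin m) (Fin m) ℂ)} (hU : ∀ n, U n ∈ S) (t : ℕ) :
    Uprod m U s t ∈ S := by
  induction t with
  | zero => exact S.one_mem
  | succ t ih =>
    rw [Uprod]
    split_ifs
    exacts [S.one_mem, S.mul_mem (hU _) ih]

end Uprod

attribute [local instance] Matrix.linftyOpNormedAddCommGroup Matrix.linftyOpNormedRing
  Matrix.linftyOpNormedAlgebra

theorem infNorm_eq_linfty_opNorm {m : ℕ} (G : Matrix (Fin m) (Fin m) ℂ) : infNorm G = ‖G‖ := by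
  rw [infNorm, linfty_opNorm_def, Finset.sup_univ_eq_ciSup, NNReal.coe_iSup]
  push_cast
  rfl

theorem Matrix.norm_mul_apply_le_linfty_opNorm {n : Type*} [Fintype n] {B Q : Matrix n n ℂ}
    {i : n} (hQ : ∀ k, ‖Q k i‖ ≤ 1) (j : n) : ‖(B * Q) j i‖ ≤ ‖B‖ :=
  calc ‖(B * Q) j i‖ = ‖(B *ᵥ fun k => Q k i) j‖ := rfl
    _ ≤ ‖B *ᵥ fun k => Q k i‖ := norm_le_pi_norm _ j
    _ ≤ ‖B‖ * ‖fun k => Q k i‖ := linfty_opNorm_mulVec _ _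
    _ ≤ ‖B‖ := mul_le_of_le_one_right (norm_nonneg _) ((pi_norm_le_iff_of_nonneg zero_le_one).2 hQ)

theorem norm_Uprod_sub_one_apply_le {m : ℕ} {U : ℕ → Matrix (Fin m) (Fin m) ℂ}
    (hU : ∀ n, U n ∈ unitaryGroup (Fin m) ℂ) {s : ℕ} {δ : ℝ} (hδ : ∀ n, s < n → ‖U n - 1‖ ≤ δ)
    (t : ℕ) (j i : Fin m) : ‖(Uprod m U s t - 1) j i‖ ≤ (t - s : ℕ) * δ := by
  induction t with
  | zero => simp [Uprod]
  | succ t ih =>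
    by_cases hts : t + 1 ≤ s
    · simp [Uprod_of_le hts, Nat.sub_eq_zero_of_le hts]
    have hst : s ≤ t := by omega
    have hQ : ∀ k, ‖Uprod m U s t k i‖ ≤ 1 :=
      fun k => entry_norm_bound_of_unitary (Uprod_mem hU t) k i
    calc ‖(Uprod m U s (t + 1) - 1) j i‖
        = ‖((U (t + 1) - 1) * Uprod m U s t) j i + (Uprod m U s t - 1) j i‖ := by
          rw [Uprod_succ_of_le hst, ← Matrix.add_apply, sub_mul, one_mul, sub_add_sub_cancel]
      _ ≤ δ + (t - s : ℕ) * δ := (norm_add_le _ _).trans <| add_le_add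
          ((norm_mul_apply_le_linfty_opNorm hQ j).trans (hδ _ (by omega))) ih
      _ = (t + 1 - s : ℕ) * δ := by rw [Nat.sub_add_comm hst]; push_cast; ring

theorem norm_exp_I_mul_rpow_neg_smul_sub_one_le {n : Type*} [Fintype n] [DecidableEq n]
    {G : Matrix n n ℂ} {ζ a x : ℝ} (hζ : 0 ≤ ζ) (ha : 0 < a) (hax : a ≤ x)
    (hG : ‖G‖ ≤ a ^ (ζ / 2)) :
    ‖exp ((Complex.I * ((x ^ (-(ζ / 2)) : ℝ) : ℂ)) • G) - 1‖ ≤ 2 * ‖G‖ / a ^ (ζ / 2) := by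
  have hε : x ^ (-(ζ / 2)) ≤ (a ^ (ζ / 2))⁻¹ := by
    rw [← Real.rpow_neg ha.le]
    exact Real.rpow_le_rpow_of_nonpos ha hax (by linarith)
  have hsmall : ‖(Complex.I * ((x ^ (-(ζ / 2)) : ℝ) : ℂ)) • G‖ ≤ ‖G‖ / a ^ (ζ / 2) := by
    rw [norm_smul, norm_mul, Complex.norm_I, one_mul, Complex.norm_real, Real.norm_eq_abs,
      abs_of_nonneg (Real.rpow_nonneg (ha.le.trans hax) _), ← inv_mul_eq_div (a ^ (ζ / 2))]
    gcongr
  rw [mul_div_assoc]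
  exact (norm_exp_sub_one_le (hsmall.trans ((div_le_one (by positivity)).2 hG))).trans
    (by gcongr)

theorem one_le_natCast_sub_one_sq_of_ne {m : ℕ} {i j : Fin m} (hij : i ≠ j) :
    1 ≤ ((m : ℝ) - 1) ^ 2 := by
  have : 1 < m := by simpa using Fintype.one_lt_card_iff_nontrivial.2 ⟨⟨i, j, hij⟩⟩
  have : (2 : ℝ) ≤ m := by exact_mod_cast this
  nlinarith

theorem stmt12_general (m : ℕ) (ζ : ℝ) (hζ : 0 < ζ)
    (G : Matrix (Fin m) (Fin m) ℂ) (hG : G.IsHermitian)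
    (U : ℕ → Matrix (Fin m) (Fin m) ℂ)
    (hU : ∀ n : ℕ, U n =
      NormedSpace.exp ((Complex.I * (((n : ℝ) ^ (-(ζ / 2)) : ℝ) : ℂ)) • G))
    (s t : ℕ) (hst : s < t)
    (hbig : 4 * infNorm G ≤ ((s : ℝ) + 1) ^ (ζ / 2))
    (i j : Fin m) (hij : i ≠ j) :
    ‖(Uprod m U s t) j i‖ ^ 2 ≤
      4 * ((m : ℝ) - 1) ^ 2 * ((t : ℝ) - (s : ℝ)) ^ 2 * infNorm G ^ 2 /
        ((s : ℝ) + 1) ^ ζ := by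
  rw [infNorm_eq_linfty_opNorm] at hbig ⊢
  set c := ((s : ℝ) + 1) ^ (ζ / 2)
  have hs : (0 : ℝ) < s + 1 := by positivity
  have hstep : ∀ n, s < n → ‖U n - 1‖ ≤ 2 * ‖G‖ / c := fun n hn => hU n ▸
    norm_exp_I_mul_rpow_neg_smul_sub_one_le hζ.le hs (by exact_mod_cast hn)
      (by linarith [norm_nonneg G])
  have hP := norm_Uprod_sub_one_apply_le
    (fun n => hU n ▸ exp_mem_unitaryGroup (hG.I_mul_smul_mem_skewAdjoint _)) hstep t j i
  rw [Matrix.sub_apply, one_apply_ne hij.symm, sub_zero, Nat.cast_sub hst.le] at hP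
  have hc2 : c ^ 2 = ((s : ℝ) + 1) ^ ζ := by
    rw [← Real.rpow_natCast, ← Real.rpow_mul hs.le]
    norm_num
  calc ‖Uprod m U s t j i‖ ^ 2 ≤ (((t : ℝ) - s) * (2 * ‖G‖ / c)) ^ 2 := by gcongr
    _ = 4 * ((t : ℝ) - s) ^ 2 * ‖G‖ ^ 2 / ((s : ℝ) + 1) ^ ζ := by rw [← hc2]; ring
    _ ≤ 4 * ((m : ℝ) - 1) ^ 2 * ((t : ℝ) - s) ^ 2 * ‖G‖ ^ 2 / ((s : ℝ) + 1) ^ ζ := by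
      gcongr
      exact le_mul_of_one_le_right (by norm_num) (one_le_natCast_sub_one_sq_of_ne hij)

/-- deterministic coherent-segment estimate: with
`U_n = exp(i n^{−ζ/2} G)` Hermitian, `0 < s < t` and `(s+1)^{ζ/2} ≥ 4‖G‖_∞`, for `i ≠ j`
one has `|⟨j| U_t ⋯ U_{s+1} |i⟩|² ≤ 4(m−1)²(t−s)²‖G‖_∞²/(s+1)^ζ`. -/
theorem stmt12 (m : ℕ) (ζ : ℝ) (hζ : 0 < ζ)
    (G : Matrix (Fin m) (Fin m) ℂ) (hG : G.IsHermitian)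
    (U : ℕ → Matrix (Fin m) (Fin m) ℂ)
    (hU : ∀ n : ℕ, U n =
      NormedSpace.exp ((Complex.I * (((n : ℝ) ^ (-(ζ / 2)) : ℝ) : ℂ)) • G))
    (s t : ℕ) (hs : 0 < s) (hst : s < t)
    (hbig : 4 * infNorm G ≤ ((s : ℝ) + 1) ^ (ζ / 2))
    (i j : Fin m) (hij : i ≠ j) :
    ‖(Uprod m U s t) j i‖ ^ 2 ≤
      4 * ((m : ℝ) - 1) ^ 2 * ((t : ℝ) - (s : ℝ)) ^ 2 * infNorm G ^ 2 /
        ((s : ℝ) + 1) ^ ζ :=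
  stmt12_general m ζ hζ G hG U hU s t hst hbig i j hij
end

section
/- Almost sure ergodicity including the boundary factor: let U_n = exp(i·n^{−ζ/2}·G) where G is an m×m Hermitian matrix with |G_{ij}| ≥ ε₀ > 0 for all i, j, and suppose 0 < ζ ≤ 1 and 0 < p ≤ 1. Then for every s ≥ 0, the random matrix product Q_{σ_s} Q_{σ_{s+1}} ⋯ Q_{σ_{n_t−1}} W_{σ_{n_t}} converges to Π almost surely as t → ∞. -/
open Matrix BigOperators MeasureTheory ProbabilityTheory Filter

/-- The measurement times `σ_n = T_1 + ⋯ + T_n` (interarrival times indexed from `0`). -/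
def sigmaT {Ω : Type*} (T : ℕ → Ω → ℕ) (n : ℕ) (ω : Ω) : ℕ :=
  ∑ k ∈ Finset.range n, T k ω

/-- `n_t = max {n ≥ 0 : σ_n ≤ t}` (the maximum is over `n ≤ t` since `σ_n ≥ n`). -/
def ntT {Ω : Type*} (T : ℕ → Ω → ℕ) (t : ℕ) (ω : Ω) : ℕ :=
  Nat.findGreatest (fun n => sigmaT T n ω ≤ t) t

/-- The random transition matrix
`Q_{σ_n}(i,j) = |⟨j| U_{σ_n + T_{n+1}} ⋯ U_{σ_n + 1} |i⟩|²`. -/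
noncomputable def Qmat {Ω : Type*} (m : ℕ) (U : ℕ → Matrix (Fin m) (Fin m) ℂ)
    (T : ℕ → Ω → ℕ) (n : ℕ) (ω : Ω) : Matrix (Fin m) (Fin m) ℝ :=
  Matrix.of fun i j => ‖(Uprod m U (sigmaT T n ω) (sigmaT T (n + 1) ω)) j i‖ ^ 2

/-- The boundary matrix `W_{σ_{n_t}}(i,j) = |⟨j| U_t ⋯ U_{σ_{n_t}+1} |i⟩|²`. -/
noncomputable def Wmat {Ω : Type*} (m : ℕ) (U : ℕ → Matrix (Fin m) (Fin m) ℂ)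
    (T : ℕ → Ω → ℕ) (t : ℕ) (ω : Ω) : Matrix (Fin m) (Fin m) ℝ :=
  Matrix.of fun i j => ‖(Uprod m U (sigmaT T (ntT T t ω) ω) t) j i‖ ^ 2


/-!
On the `n`-th measurement interval `(σ_n, σ_{n+1}]` the evolution is `exp (i θ_n G)` with
`θ_n = ∑_{σ_n < k ≤ σ_{n+1}} k^{-ζ/2}`, so `Q_{σ_n}` is the doubly stochastic matrix
`|exp (i θ_n G)_{ji}|²`. For small `θ` all its entries are at least `c θ²`: the off-diagonal ones
grow like `θ |G_ij|`. A row-stochastic matrix whose entries are at least `δ` contracts the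
oscillation `max v - min v` of a vector by the factor `1 - m δ`. Almost surely
`T_n ≤ θ₀ n^{ζ/2}` eventually (Borel–Cantelli with geometric tails), which keeps `θ_n ≤ θ₀`,
while `∑ θ_n² ≥ ∑ k^{-ζ} = ∞` because `ζ ≤ 1`. So the product of the contraction factors tends
to `0`, and since every column of `Q_{σ_s} ⋯ Q_{σ_{n_t-1}} W_{σ_{n_t}}` sums to `1`, small
oscillation forces all its entries towards `1/m`.
-/

open Finset Topology

section Oscillation

variable {n : Type*} [Fintype n] [Nonempty n]

noncomputable def osc (v : n → ℝ) : ℝ :=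
  univ.sup' univ_nonempty v - univ.inf' univ_nonempty v

noncomputable def minEntry (A : Matrix n n ℝ) : ℝ :=
  univ.inf' univ_nonempty fun i => univ.inf' univ_nonempty (A i)

lemma minEntry_le (A : Matrix n n ℝ) (i j : n) : minEntry A ≤ A i j :=
  (inf'_le _ (mem_univ i)).trans (inf'_le _ (mem_univ j))

lemma le_minEntry {A : Matrix n n ℝ} {c : ℝ} (h : ∀ i j, c ≤ A i j) : c ≤ minEntry A :=
  le_inf' _ _ fun i _ => le_inf' _ _ fun j _ => h i j

lemma osc_le_one {v : n → ℝ} (h0 : ∀ i, 0 ≤ v i) (h1 : ∀ i, v i ≤ 1) : osc v ≤ 1 := by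
  have hsup : univ.sup' univ_nonempty v ≤ 1 := sup'_le _ _ fun i _ => h1 i
  have hinf : 0 ≤ univ.inf' univ_nonempty v := le_inf' _ _ fun i _ => h0 i
  rw [osc]
  linarith

lemma card_mul_le_one_of_le_entries [DecidableEq n] {A : Matrix n n ℝ}
    (hA : A ∈ Matrix.rowStochastic ℝ n) {δ : ℝ} (hδ : ∀ i j, δ ≤ A i j) :
    Fintype.card n * δ ≤ 1 := by
  obtain ⟨i⟩ := ‹Nonempty n›
  calc (Fintype.card n : ℝ) * δ = ∑ _j : n, δ := by simp
    _ ≤ ∑ j, A i j := sum_le_sum fun j _ => hδ i j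
    _ = 1 := Matrix.sum_row_of_mem_rowStochastic hA i

/-- Doeblin: each row of `A` spends the weight `card n * δ` uniformly, so only the remaining
`1 - card n * δ` can separate two rows. -/
lemma osc_mulVec_le [DecidableEq n] {A : Matrix n n ℝ} (hA : A ∈ Matrix.rowStochastic ℝ n)
    {δ : ℝ} (hδ : ∀ i j, δ ≤ A i j) (v : n → ℝ) :
    osc (A *ᵥ v) ≤ (1 - Fintype.card n * δ) * osc v := by
  set S := univ.sup' univ_nonempty v
  set I := univ.inf' univ_nonempty v
  have hweights : ∀ i, ∑ k, (A i k - δ) = 1 - Fintype.card n * δ := fun i => by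
    simp [sum_sub_distrib, Matrix.sum_row_of_mem_rowStochastic hA i]
  have hsplit : ∀ i, (A *ᵥ v) i = ∑ k, (A i k - δ) * v k + δ * ∑ k, v k := fun i => by
    simp only [Matrix.mulVec, dotProduct, mul_sum, ← sum_add_distrib]
    exact sum_congr rfl fun k _ => by ring
  have hupper : ∀ i, (A *ᵥ v) i ≤ (1 - Fintype.card n * δ) * S + δ * ∑ k, v k := fun i => by
    rw [hsplit, ← hweights i, sum_mul]
    gcongr with k
    · linarith [hδ i k]
    · exact le_sup' v (mem_univ k)
  have hlower : ∀ i, (1 - Fintype.card n * δ) * I + δ * ∑ k, v k ≤ (A *ᵥ v) i := fun i => by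
    rw [hsplit, ← hweights i, sum_mul]
    gcongr with k
    · linarith [hδ i k]
    · exact inf'_le v (mem_univ k)
  have hsup := sup'_le univ_nonempty (A *ᵥ v) fun i _ => hupper i
  have hinf := le_inf' univ_nonempty (A *ᵥ v) fun i _ => hlower i
  rw [osc, osc]
  linarith

lemma osc_listProd_mulVec_le [DecidableEq n] {A : ℕ → Matrix n n ℝ}
    (hA : ∀ k, A k ∈ Matrix.rowStochastic ℝ n) {δ : ℕ → ℝ} (hδ : ∀ k i j, δ k ≤ A k i j)
    (v : n → ℝ) (N : ℕ) :
    osc (((List.range N).map A).prod *ᵥ v) ≤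
      (∏ k ∈ range N, (1 - Fintype.card n * δ k)) * osc v := by
  induction N generalizing v with
  | zero => simp
  | succ N ih =>
    rw [List.range_succ, List.map_append, List.prod_append, List.map_singleton,
      List.prod_singleton, ← Matrix.mulVec_mulVec, prod_range_succ, mul_assoc]
    refine (ih _).trans ?_
    have hprod : 0 ≤ ∏ k ∈ range N, (1 - Fintype.card n * δ k) :=
      prod_nonneg fun k _ => sub_nonneg.2 (card_mul_le_one_of_le_entries (hA k) (hδ k))
    simpa using mul_le_mul_of_nonneg_left (osc_mulVec_le (hA N) (hδ N) v) hprod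

lemma abs_sub_inv_card_le_osc {v : n → ℝ} (hv : ∑ i, v i = 1) (i : n) :
    |v i - 1 / Fintype.card n| ≤ osc v := by
  have hcard : (0 : ℝ) < Fintype.card n := by exact_mod_cast Fintype.card_pos
  have hinf : univ.inf' univ_nonempty v ≤ 1 / Fintype.card n := by
    rw [le_div_iff₀ hcard, ← hv]
    simpa [mul_comm] using card_nsmul_le_sum univ v _ fun k _ => inf'_le v (mem_univ k)
  have hsup : 1 / Fintype.card n ≤ univ.sup' univ_nonempty v := by
    rw [div_le_iff₀ hcard, ← hv]
    simpa [mul_comm] using sum_le_card_nsmul univ v _ fun k _ => le_sup' v (mem_univ k)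
  have := le_sup' v (mem_univ i)
  have := inf'_le v (mem_univ i)
  rw [abs_le, osc]
  constructor <;> linarith

lemma abs_listProd_mul_sub_le [DecidableEq n] {A : ℕ → Matrix n n ℝ}
    (hA : ∀ k, A k ∈ doublyStochastic ℝ n) {W : Matrix n n ℝ}
    (hW : W ∈ doublyStochastic ℝ n) (N : ℕ) (i j : n) :
    |(((List.range N).map A).prod * W) i j - 1 / Fintype.card n| ≤
      ∏ k ∈ range N, (1 - Fintype.card n * minEntry (A k)) := by
  have hrow : ∀ k, A k ∈ Matrix.rowStochastic ℝ n := fun k =>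
    (mem_doublyStochastic_iff_mem_rowStochastic_and_mem_colStochastic.1 (hA k)).1
  have hprod : ((List.range N).map A).prod * W ∈ doublyStochastic ℝ n :=
    mul_mem (Submonoid.list_prod_mem _ (by simp [hA])) hW
  have hcol : (fun i => (((List.range N).map A).prod * W) i j) =
      ((List.range N).map A).prod *ᵥ fun k => W k j := by
    ext i
    simp [Matrix.mul_apply, Matrix.mulVec, dotProduct]
  have hoscW : osc (fun k => W k j) ≤ 1 :=
    osc_le_one (fun k => nonneg_of_mem_doublyStochastic hW)
      (fun k => le_one_of_mem_doublyStochastic hW)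
  have hfactors : 0 ≤ ∏ k ∈ range N, (1 - Fintype.card n * minEntry (A k)) :=
    prod_nonneg fun k _ => sub_nonneg.2 (card_mul_le_one_of_le_entries (hrow k) (minEntry_le _))
  calc _ ≤ osc (fun i => (((List.range N).map A).prod * W) i j) :=
        abs_sub_inv_card_le_osc (sum_col_of_mem_doublyStochastic hprod j) i
    _ ≤ (∏ k ∈ range N, (1 - Fintype.card n * minEntry (A k))) * osc (fun k => W k j) := by
        rw [hcol]
        exact osc_listProd_mulVec_le hrow (fun k => minEntry_le (A k)) _ N
    _ ≤ ∏ k ∈ range N, (1 - Fintype.card n * minEntry (A k)) :=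
        mul_le_of_le_one_right hfactors hoscW

end Oscillation

section Unitary

variable {n : Type*}

noncomputable def transitionMatrix (V : Matrix n n ℂ) : Matrix n n ℝ :=
  Matrix.of fun i j => ‖V j i‖ ^ 2

@[simp]
lemma transitionMatrix_apply (V : Matrix n n ℂ) (i j : n) :
    transitionMatrix V i j = ‖V j i‖ ^ 2 :=
  rfl

variable [Fintype n] [DecidableEq n]

lemma transitionMatrix_mem_doublyStochastic {V : Matrix n n ℂ}
    (hV : V ∈ unitary (Matrix n n ℂ)) : transitionMatrix V ∈ doublyStochastic ℝ n := by
  simp only [mem_doublyStochastic_iff_sum, transitionMatrix_apply]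
  refine ⟨fun i j => by positivity, fun i => ?_, fun j => ?_⟩
  · have h : (star V * V) i i = (1 : Matrix n n ℂ) i i := by rw [Unitary.star_mul_self_of_mem hV]
    simp only [Matrix.star_eq_conjTranspose, Matrix.mul_apply, Matrix.conjTranspose_apply,
      RCLike.star_def, Complex.conj_mul', Matrix.one_apply_eq] at h
    exact_mod_cast h
  · have h : (V * star V) j j = (1 : Matrix n n ℂ) j j := by rw [Unitary.mul_star_self_of_mem hV]
    simp only [Matrix.star_eq_conjTranspose, Matrix.mul_apply, Matrix.conjTranspose_apply,
      RCLike.star_def, Complex.mul_conj', Matrix.one_apply_eq] at h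
    exact_mod_cast h

noncomputable def expI (G : Matrix n n ℂ) (θ : ℝ) : Matrix n n ℂ :=
  NormedSpace.exp ((Complex.I * θ) • G)

lemma expI_zero (G : Matrix n n ℂ) : expI G 0 = 1 := by
  simp [expI]

lemma expI_add (G : Matrix n n ℂ) (a b : ℝ) : expI G (a + b) = expI G a * expI G b := by
  rw [expI, expI, expI, ← Matrix.exp_add_of_commute _ _
    (((Commute.refl G).smul_left _).smul_right _), ← add_smul]
  push_cast
  ring_nf

lemma star_expI {G : Matrix n n ℂ} (hG : G.IsHermitian) (θ : ℝ) :
    star (expI G θ) = expI G (-θ) := by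
  rw [expI, expI, Matrix.star_eq_conjTranspose, ← Matrix.exp_conjTranspose,
    Matrix.conjTranspose_smul, hG.eq]
  congr 1
  simp

lemma expI_mem_unitary {G : Matrix n n ℂ} (hG : G.IsHermitian) (θ : ℝ) :
    expI G θ ∈ unitary (Matrix n n ℂ) := by
  rw [Unitary.mem_iff, star_expI hG, ← expI_add, ← expI_add, neg_add_cancel, add_neg_cancel,
    expI_zero]
  exact ⟨rfl, rfl⟩

lemma hasDerivAt_expI_apply (G : Matrix n n ℂ) (i j : n) :
    HasDerivAt (fun θ : ℝ => expI G θ i j) (Complex.I * G i j) 0 := by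
  let : NormedRing (Matrix n n ℂ) := Matrix.linftyOpNormedRing
  let : NormedAlgebra ℂ (Matrix n n ℂ) := Matrix.linftyOpNormedAlgebra
  have hexp : HasDerivAt (fun z : ℂ => NormedSpace.exp (z • G) i j) (G i j) 0 := by
    have := (Matrix.entryLinearMap ℂ ℂ i j).toContinuousLinearMap.hasFDerivAt.comp_hasDerivAt 0
      (hasDerivAt_exp_smul_const (𝕂 := ℂ) G 0)
    rw [zero_smul, NormedSpace.exp_zero, one_mul] at this
    exact this
  have hpath : HasDerivAt (fun θ : ℝ => Complex.I * θ) Complex.I 0 := by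
    simpa using (hasDerivAt_id (0 : ℝ)).ofReal_comp.const_mul Complex.I
  rw [mul_comm]
  exact hexp.comp_of_eq (0 : ℝ) hpath (by simp)

lemma eventually_mul_le_norm_of_hasDerivAt {E : Type*} [NormedAddCommGroup E] [NormedSpace ℝ E]
    {f : ℝ → E} {f' : E} (hf : HasDerivAt f f' 0) (h0 : f 0 = 0) {c : ℝ} (hc : c < ‖f'‖) :
    ∀ᶠ θ in 𝓝[>] 0, c * θ ≤ ‖f θ‖ := by
  have hslope := (hasDerivAt_iff_tendsto_slope.1 hf).norm.mono_left
    (nhdsWithin_mono _ fun θ (hθ : 0 < θ) => hθ.ne')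
  filter_upwards [hslope.eventually (eventually_gt_nhds hc), self_mem_nhdsWithin]
    with θ hslopeθ (hθ : 0 < θ)
  simp only [slope_def_module, h0, sub_zero, norm_smul, norm_inv, Real.norm_of_nonneg hθ.le,
    inv_mul_eq_div] at hslopeθ
  rw [lt_div_iff₀ hθ] at hslopeθ
  exact hslopeθ.le

lemma exists_sq_le_transitionMatrix_expI {G : Matrix n n ℂ} {ε : ℝ} (hε : 0 < ε)
    (hGε : ∀ i j, i ≠ j → ε ≤ ‖G i j‖) :
    ∃ c > 0, ∀ᶠ θ in 𝓝[>] (0 : ℝ), ∀ i j, c * θ ^ 2 ≤ transitionMatrix (expI G θ) i j := by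
  refine ⟨(ε / 2) ^ 2, by positivity, ?_⟩
  have hpos : ∀ᶠ θ in 𝓝[>] (0 : ℝ), 0 < θ := self_mem_nhdsWithin
  simp only [eventually_all, transitionMatrix_apply]
  intro i j
  rcases eq_or_ne j i with rfl | hji
  · have hsmall : ∀ᶠ θ in 𝓝[>] (0 : ℝ), ε * θ < 1 := nhdsWithin_le_nhds <|
      (continuous_const_mul ε).continuousAt.eventually_lt continuousAt_const (by simp)
    have hdiag : ∀ᶠ θ in 𝓝[>] (0 : ℝ), 1 / 2 < ‖expI G θ j j‖ := nhdsWithin_le_nhds <|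
      (hasDerivAt_expI_apply G j j).continuousAt.norm.eventually_const_lt (by norm_num [expI_zero])
    filter_upwards [hpos, hsmall, hdiag] with θ hθ hεθ hθjj
    have hεθ_sq : (ε * θ) ^ 2 < 1 := by nlinarith [mul_pos hε hθ]
    have hθjj_sq : (1 / 2) ^ 2 < ‖expI G θ j j‖ ^ 2 :=
      pow_lt_pow_left₀ hθjj (by norm_num) two_ne_zero
    nlinarith
  · have hoff := eventually_mul_le_norm_of_hasDerivAt (hasDerivAt_expI_apply G j i)
      (by simp [expI_zero, Matrix.one_apply_ne hji]) (c := ε / 2)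
      (by rw [norm_mul, Complex.norm_I, one_mul]; linarith [hGε j i hji])
    filter_upwards [hpos, hoff] with θ hθ hjiθ
    rw [← mul_pow]
    exact pow_le_pow_left₀ (by positivity) (by linarith) 2

end Unitary

lemma Uprod_eq_expI {m : ℕ} {G : Matrix (Fin m) (Fin m) ℂ} {U : ℕ → Matrix (Fin m) (Fin m) ℂ}
    {w : ℕ → ℝ} (hU : ∀ k, U k = expI G (w k)) (s t : ℕ) :
    Uprod m U s t = expI G (∑ k ∈ Ioc s t, w k) := by
  induction t with
  | zero => simp [Uprod, expI_zero]
  | succ t ih =>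
    by_cases hts : t + 1 ≤ s
    · simp [Uprod, hts, expI_zero]
    · rw [Uprod, if_neg hts, ih, hU, ← expI_add, sum_Ioc_succ_top (by omega), add_comm]

section Geometric

variable {Ω : Type*} [MeasurableSpace Ω] {μ : Measure Ω} {p : ℝ}

lemma measure_le_eq_of_geometric {X : Ω → ℕ} (hX : Measurable X) (hp0 : 0 < p) (hp1 : p ≤ 1)
    (hgeom : ∀ k, 1 ≤ k → μ {ω | X ω = k} = ENNReal.ofReal (p * (1 - p) ^ (k - 1)))
    {K : ℕ} (hK : 1 ≤ K) : μ {ω | K ≤ X ω} = ENNReal.ofReal ((1 - p) ^ (K - 1)) := by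
  have hunion : {ω | K ≤ X ω} = ⋃ j : ℕ, {ω | X ω = K + j} := by
    ext ω
    simp only [Set.mem_ofPred_eq, Set.mem_iUnion]
    exact ⟨fun h => ⟨X ω - K, by omega⟩, fun ⟨j, hj⟩ => by omega⟩
  have hdisj : Pairwise (Function.onFun Disjoint fun j : ℕ => {ω | X ω = K + j}) :=
    fun i j hij => Set.disjoint_left.2 fun ω (hi : X ω = K + i) (hj : X ω = K + j) =>
      hij (by omega)
  have hterm : ∀ j, μ {ω | X ω = K + j} = ENNReal.ofReal (p * (1 - p) ^ (K - 1) * (1 - p) ^ j) :=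
    fun j => by rw [hgeom _ (by omega), mul_assoc, ← pow_add, show K + j - 1 = K - 1 + j by omega]
  have hr0 : 0 ≤ 1 - p := by linarith
  have hr1 : 1 - p < 1 := by linarith
  rw [hunion, measure_iUnion hdisj fun j => hX (measurableSet_singleton _), tsum_congr hterm,
    ← ENNReal.ofReal_tsum_of_nonneg (fun j => by positivity)
      ((summable_geometric_of_lt_one hr0 hr1).mul_left _),
    tsum_mul_left, tsum_geometric_of_lt_one hr0 hr1, sub_sub_cancel, mul_comm p,
    mul_assoc, mul_inv_cancel₀ hp0.ne', mul_one]

lemma ae_one_le_of_geometric [IsProbabilityMeasure μ] {X : Ω → ℕ} (hX : Measurable X)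
    (hp0 : 0 < p) (hp1 : p ≤ 1)
    (hgeom : ∀ k, 1 ≤ k → μ {ω | X ω = k} = ENNReal.ofReal (p * (1 - p) ^ (k - 1))) :
    ∀ᵐ ω ∂μ, 1 ≤ X ω := by
  rw [ae_iff_measure_eq (measurableSet_le measurable_const hX).nullMeasurableSet,
    measure_le_eq_of_geometric hX hp0 hp1 hgeom le_rfl]
  simp

lemma summable_exp_neg_mul_rpow {b δ : ℝ} (hb : 0 < b) (hδ : 0 < δ) :
    Summable fun n : ℕ => Real.exp (-(b * (n : ℝ) ^ δ)) := by
  have hdecay : Tendsto (fun n : ℕ => (n : ℝ) ^ (2 : ℝ) * Real.exp (-(b * (n : ℝ) ^ δ)))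
      atTop (𝓝 0) := by
    refine ((tendsto_rpow_mul_exp_neg_mul_atTop_nhds_zero (2 / δ) b hb).comp
      ((tendsto_rpow_atTop hδ).comp tendsto_natCast_atTop_atTop)).congr fun n => ?_
    simp only [Function.comp_apply, neg_mul]
    rw [← Real.rpow_mul (Nat.cast_nonneg n), mul_div_cancel₀ _ hδ.ne']
  refine .of_norm_bounded_eventually_nat
    (Real.summable_nat_rpow.2 (by norm_num : (-2 : ℝ) < -1)) ?_
  filter_upwards [hdecay.eventually (gt_mem_nhds one_pos), eventually_gt_atTop 0] with n hn hn0
  have hn_pos : (0 : ℝ) < (n : ℝ) ^ (2 : ℝ) := by positivity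
  rw [Real.norm_of_nonneg (Real.exp_nonneg _), Real.rpow_neg (Nat.cast_nonneg n), ← one_div,
    le_div_iff₀ hn_pos, mul_comm]
  exact hn.le

/-- First Borel–Cantelli lemma: the tails `(1 - p) ^ ⌊a n ^ δ⌋₊ ≤ exp (p - p a n ^ δ)` are
summable. -/
lemma ae_eventually_le_mul_rpow {X : ℕ → Ω → ℕ} (hX : ∀ n, Measurable (X n)) (hp0 : 0 < p)
    (hp1 : p ≤ 1)
    (hgeom : ∀ n k, 1 ≤ k → μ {ω | X n ω = k} = ENNReal.ofReal (p * (1 - p) ^ (k - 1)))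
    {a δ : ℝ} (ha : 0 < a) (hδ : 0 < δ) :
    ∀ᵐ ω ∂μ, ∀ᶠ n in atTop, (X n ω : ℝ) ≤ a * (n : ℝ) ^ δ := by
  have hbound : ∀ n : ℕ, μ {ω | a * (n : ℝ) ^ δ < X n ω} ≤
      ENNReal.ofReal (Real.exp p * Real.exp (-(p * a * (n : ℝ) ^ δ))) := by
    intro n
    have hx : 0 ≤ a * (n : ℝ) ^ δ := by positivity
    have hset : {ω | a * (n : ℝ) ^ δ < X n ω} = {ω | ⌊a * (n : ℝ) ^ δ⌋₊ + 1 ≤ X n ω} := by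
      ext ω
      simp only [Set.mem_ofPred_eq, Nat.add_one_le_iff, Nat.floor_lt hx]
    rw [hset, measure_le_eq_of_geometric (hX n) hp0 hp1 (hgeom n) (by omega), Nat.add_sub_cancel]
    refine ENNReal.ofReal_le_ofReal ?_
    calc (1 - p) ^ ⌊a * (n : ℝ) ^ δ⌋₊ ≤ Real.exp (-p) ^ ⌊a * (n : ℝ) ^ δ⌋₊ := by
          gcongr
          linarith [Real.add_one_le_exp (-p)]
      _ = Real.exp (-(p * ⌊a * (n : ℝ) ^ δ⌋₊)) := by rw [← Real.exp_nat_mul]; ring_nf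
      _ ≤ Real.exp (-(p * (a * (n : ℝ) ^ δ - 1))) := by
          gcongr
          linarith [Nat.sub_one_lt_floor (a * (n : ℝ) ^ δ)]
      _ = Real.exp p * Real.exp (-(p * a * (n : ℝ) ^ δ)) := by rw [← Real.exp_add]; ring_nf
  have hsummable : Summable fun n : ℕ => Real.exp p * Real.exp (-(p * a * (n : ℝ) ^ δ)) :=
    (summable_exp_neg_mul_rpow (mul_pos hp0 ha) hδ).mul_left _
  have htsum : ∑' n : ℕ, μ {ω | a * (n : ℝ) ^ δ < X n ω} ≠ ⊤ := by
    refine ne_top_of_le_ne_top ?_ (ENNReal.tsum_le_tsum hbound)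
    rw [← ENNReal.ofReal_tsum_of_nonneg (fun n => by positivity) hsummable]
    exact ENNReal.ofReal_ne_top
  filter_upwards [ae_eventually_notMem htsum] with ω hω
  filter_upwards [hω] with n hn
  simpa using hn

end Geometric

section Divergence

lemma tendsto_prod_one_sub_of_not_summable {a : ℕ → ℝ} (ha0 : ∀ n, 0 ≤ a n)
    (ha1 : ∀ n, a n ≤ 1) (h : ¬Summable a) :
    Tendsto (fun N => ∏ n ∈ range N, (1 - a n)) atTop (𝓝 0) := by
  have hexp : Tendsto (fun N => Real.exp (-∑ n ∈ range N, a n)) atTop (𝓝 0) :=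
    Real.tendsto_exp_atBot.comp <| tendsto_neg_atTop_atBot.comp <|
      (not_summable_iff_tendsto_nat_atTop_of_nonneg ha0).1 h
  refine tendsto_of_tendsto_of_tendsto_of_le_of_le tendsto_const_nhds hexp
    (fun N => prod_nonneg fun n _ => sub_nonneg.2 (ha1 n)) fun N => ?_
  rw [← sum_neg_distrib, Real.exp_sum]
  exact prod_le_prod (fun n _ => sub_nonneg.2 (ha1 n)) fun n _ => by
    linarith [Real.add_one_le_exp (-a n)]

lemma tendsto_sum_Ioc_atTop_of_not_summable {g : ℕ → ℝ} (hg : ∀ k, 0 ≤ g k)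
    (h : ¬Summable g) (a : ℕ) : Tendsto (fun b => ∑ k ∈ Ioc a b, g k) atTop atTop := by
  have hrange := ((not_summable_iff_tendsto_nat_atTop_of_nonneg hg).1 h).comp
    (tendsto_add_atTop_nat 1)
  refine (tendsto_atTop_add_const_right _ (-∑ k ∈ range (a + 1), g k) hrange).congr' ?_
  filter_upwards [eventually_ge_atTop a] with b hab
  have hsplit : range (b + 1) = range (a + 1) ∪ Ioc a b := by
    ext k
    simp only [mem_union, mem_range, mem_Ioc]
    omega
  rw [Function.comp_apply, hsplit, sum_union (disjoint_left.2 fun k hk hk' => by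
    simp only [mem_range, mem_Ioc] at hk hk'
    omega)]
  ring

lemma sum_range_sum_Ioc {σ : ℕ → ℕ} (hσ : Monotone σ) (g : ℕ → ℝ) (N : ℕ) :
    ∑ n ∈ range N, ∑ k ∈ Ioc (σ n) (σ (n + 1)), g k = ∑ k ∈ Ioc (σ 0) (σ N), g k := by
  induction N with
  | zero => simp
  | succ N ih =>
    rw [sum_range_succ, ih, sum_Ioc_consecutive _ (hσ (Nat.zero_le N)) (hσ N.le_succ)]

lemma not_summable_sq_sum_Ioc {w : ℕ → ℝ} (hw : ∀ k, 0 ≤ w k) (h : ¬Summable fun k => w k ^ 2)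
    {σ : ℕ → ℕ} (hσ : Monotone σ) (hσ_top : Tendsto σ atTop atTop) :
    ¬Summable fun n => (∑ k ∈ Ioc (σ n) (σ (n + 1)), w k) ^ 2 := by
  rw [not_summable_iff_tendsto_nat_atTop_of_nonneg fun n => sq_nonneg _]
  refine tendsto_atTop_mono (fun N => ?_)
    ((tendsto_sum_Ioc_atTop_of_not_summable (fun k => sq_nonneg (w k)) h (σ 0)).comp hσ_top)
  rw [Function.comp_apply, ← sum_range_sum_Ioc hσ]
  exact sum_le_sum fun n _ => sum_sq_le_sq_sum_of_nonneg fun k _ => hw k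

end Divergence

lemma tendsto_listProd_mul_of_not_summable {n : Type*} [Fintype n] [DecidableEq n] [Nonempty n]
    {A : ℕ → Matrix n n ℝ} (hA : ∀ k, A k ∈ doublyStochastic ℝ n)
    (hsum : ¬Summable fun k => minEntry (A k)) {W : ℕ → Matrix n n ℝ}
    (hW : ∀ t, W t ∈ doublyStochastic ℝ n) {N : ℕ → ℕ} (hN : Tendsto N atTop atTop) :
    Tendsto (fun t => ((List.range (N t)).map A).prod * W t) atTop
      (𝓝 (Matrix.of fun _ _ => 1 / (Fintype.card n : ℝ))) := by
  have hrow : ∀ k, A k ∈ Matrix.rowStochastic ℝ n := fun k =>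
    (mem_doublyStochastic_iff_mem_rowStochastic_and_mem_colStochastic.1 (hA k)).1
  have hcard : (Fintype.card n : ℝ) ≠ 0 := by exact_mod_cast Fintype.card_ne_zero
  have hprod := (tendsto_prod_one_sub_of_not_summable
    (fun k => mul_nonneg (Nat.cast_nonneg _)
      (le_minEntry fun i j => nonneg_of_mem_doublyStochastic (hA k)))
    (fun k => card_mul_le_one_of_le_entries (hrow k) (minEntry_le _))
    (fun h => hsum ((summable_mul_left_iff hcard).1 h))).comp hN
  refine tendsto_pi_nhds.2 fun i => tendsto_pi_nhds.2 fun j => ?_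
  exact tendsto_iff_norm_sub_tendsto_zero.2 <| squeeze_zero_norm
    (fun t => (Real.norm_of_nonneg (abs_nonneg _)).trans_le
      (abs_listProd_mul_sub_le hA (hW t) (N t) i j)) hprod

section Measurements

variable {Ω : Type*} {T : ℕ → Ω → ℕ} {ω : Ω}

lemma sigmaT_succ (n : ℕ) : sigmaT T (n + 1) ω = sigmaT T n ω + T n ω :=
  sum_range_succ _ n

lemma sigmaT_mono : Monotone fun n => sigmaT T n ω :=
  fun _ _ h => sum_le_sum_of_subset (range_mono h)

lemma le_sigmaT (hT : ∀ n, 1 ≤ T n ω) (n : ℕ) : n ≤ sigmaT T n ω := by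
  induction n with
  | zero => exact Nat.zero_le _
  | succ n ih => rw [sigmaT_succ]; linarith [hT n]

lemma tendsto_ntT (hT : ∀ n, 1 ≤ T n ω) : Tendsto (fun t => ntT T t ω) atTop atTop :=
  tendsto_atTop_atTop.2 fun n =>
    ⟨sigmaT T n ω, fun _ ht => Nat.le_findGreatest ((le_sigmaT hT n).trans ht) ht⟩

variable {m : ℕ} {G : Matrix (Fin m) (Fin m) ℂ} {U : ℕ → Matrix (Fin m) (Fin m) ℂ} {w : ℕ → ℝ}

lemma Qmat_eq (hU : ∀ k, U k = expI G (w k)) (n : ℕ) :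
    Qmat m U T n ω =
      transitionMatrix (expI G (∑ k ∈ Ioc (sigmaT T n ω) (sigmaT T (n + 1) ω), w k)) := by
  rw [← Uprod_eq_expI hU]
  rfl

lemma Wmat_eq (hU : ∀ k, U k = expI G (w k)) (t : ℕ) :
    Wmat m U T t ω = transitionMatrix (expI G (∑ k ∈ Ioc (sigmaT T (ntT T t ω) ω) t, w k)) := by
  rw [← Uprod_eq_expI hU]
  rfl

lemma sum_Ioc_rpow_neg_le {a b n : ℕ} (hn : 0 < n) (hna : n ≤ a) {δ : ℝ} (hδ : 0 ≤ δ) :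
    ∑ k ∈ Ioc a b, (k : ℝ) ^ (-δ) ≤ (b - a : ℕ) * (n : ℝ) ^ (-δ) := by
  rw [← Nat.card_Ioc, ← nsmul_eq_mul]
  refine sum_le_card_nsmul _ _ _ fun k hk => Real.rpow_le_rpow_of_nonpos (by positivity) ?_
    (by linarith)
  exact_mod_cast hna.trans (mem_Ioc.1 hk).1.le

lemma not_summable_minEntry_Qmat [NeZero m] {ζ : ℝ} (hζ0 : 0 < ζ) (hζ1 : ζ ≤ 1)
    (hU : ∀ k : ℕ, U k = expI G ((k : ℝ) ^ (-(ζ / 2)))) {c θ₀ : ℝ} (hc : 0 < c)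
    (hlow : ∀ θ ∈ Set.Ioc 0 θ₀, ∀ i j, c * θ ^ 2 ≤ transitionMatrix (expI G θ) i j)
    (hT : ∀ n, 1 ≤ T n ω) (hT_le : ∀ᶠ n in atTop, (T n ω : ℝ) ≤ θ₀ * (n : ℝ) ^ (ζ / 2)) :
    ¬Summable fun n => minEntry (Qmat m U T n ω) := by
  set θ : ℕ → ℝ := fun n => ∑ k ∈ Ioc (sigmaT T n ω) (sigmaT T (n + 1) ω), (k : ℝ) ^ (-(ζ / 2))
  have hσ_lt : ∀ n, sigmaT T n ω < sigmaT T (n + 1) ω := fun n => by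
    rw [sigmaT_succ]; linarith [hT n]
  have hθ_pos : ∀ n, 0 < θ n := fun n =>
    sum_pos (fun k hk => Real.rpow_pos_of_pos
      (by exact_mod_cast (mem_Ioc.1 hk).1.trans_le' (Nat.zero_le _)) _) (nonempty_Ioc.2 (hσ_lt n))
  have hθ_le : ∀ᶠ n in atTop, θ n ≤ θ₀ := by
    filter_upwards [hT_le, eventually_gt_atTop 0] with n hn hn0
    have hn_pos : (0 : ℝ) < n := by exact_mod_cast hn0
    calc θ n ≤ (sigmaT T (n + 1) ω - sigmaT T n ω : ℕ) * (n : ℝ) ^ (-(ζ / 2)) :=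
          sum_Ioc_rpow_neg_le hn0 (le_sigmaT hT n) (by linarith)
      _ = (T n ω : ℝ) * (n : ℝ) ^ (-(ζ / 2)) := by rw [sigmaT_succ, Nat.add_sub_cancel_left]
      _ ≤ θ₀ * (n : ℝ) ^ (ζ / 2) * (n : ℝ) ^ (-(ζ / 2)) := by gcongr
      _ = θ₀ := by rw [mul_assoc, ← Real.rpow_add hn_pos, add_neg_cancel, Real.rpow_zero, mul_one]
  have hθ_sq : ¬Summable fun n => θ n ^ 2 := by
    refine not_summable_sq_sum_Ioc (fun k => by positivity) ?_ sigmaT_mono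
      (tendsto_atTop_mono (le_sigmaT hT) tendsto_id)
    have hsq : ∀ k : ℕ, ((k : ℝ) ^ (-(ζ / 2))) ^ 2 = (k : ℝ) ^ (-ζ) := fun k => by
      rw [← Real.rpow_natCast, ← Real.rpow_mul (Nat.cast_nonneg k)]
      ring_nf
    simp only [hsq, Real.summable_nat_rpow]
    linarith
  intro hsum
  refine hθ_sq ((hsum.mul_left c⁻¹).of_norm_bounded_eventually_nat ?_)
  filter_upwards [hθ_le] with n hn
  rw [Real.norm_of_nonneg (sq_nonneg _), le_inv_mul_iff₀ hc]
  exact le_minEntry fun i j => by rw [Qmat_eq hU]; exact hlow _ ⟨hθ_pos n, hn⟩ i j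

end Measurements

theorem stmt14_general (m : ℕ) (G : Matrix (Fin m) (Fin m) ℂ) (hG : G.IsHermitian)
    (ε₀ : ℝ) (hε₀ : 0 < ε₀) (hGlow : ∀ i j, ε₀ ≤ ‖G i j‖)
    (ζ : ℝ) (hζ0 : 0 < ζ) (hζ1 : ζ ≤ 1)
    (p : ℝ) (hp0 : 0 < p) (hp1 : p ≤ 1)
    (U : ℕ → Matrix (Fin m) (Fin m) ℂ)
    (hU : ∀ n : ℕ, U n =
      NormedSpace.exp ((Complex.I * (((n : ℝ) ^ (-(ζ / 2)) : ℝ) : ℂ)) • G))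
    {Ω : Type*} [MeasureSpace Ω] [IsProbabilityMeasure (ℙ : Measure Ω)]
    (T : ℕ → Ω → ℕ) (hTmeas : ∀ n, Measurable (T n))
    (hTgeom : ∀ n k, 1 ≤ k →
      (ℙ {ω | T n ω = k} : ENNReal) = ENNReal.ofReal (p * (1 - p) ^ (k - 1)))
    (s : ℕ) :
    ∀ᵐ ω ∂(ℙ : Measure Ω),
      Tendsto (fun t =>
          (((List.range (ntT T t ω - s)).map (fun k => Qmat m U T (s + k) ω)).prod *
            Wmat m U T t ω))
        atTop (nhds (Matrix.of fun _ _ : Fin m => (1 : ℝ) / m)) := by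
  rcases Nat.eq_zero_or_pos m with rfl | hm
  · exact ae_of_all _ fun ω => tendsto_pi_nhds.2 fun i => i.elim0
  have : NeZero m := ⟨hm.ne'⟩
  obtain ⟨c, hc, hlow⟩ := exists_sq_le_transitionMatrix_expI hε₀ fun i j _ => hGlow i j
  obtain ⟨θ₀, hθ₀, hlow⟩ := mem_nhdsGT_iff_exists_Ioc_subset.1 hlow
  have hU' : ∀ k : ℕ, U k = expI G ((k : ℝ) ^ (-(ζ / 2))) := hU
  have hT : ∀ᵐ ω ∂(ℙ : Measure Ω), ∀ n, 1 ≤ T n ω :=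
    ae_all_iff.2 fun n => ae_one_le_of_geometric (hTmeas n) hp0 hp1 (hTgeom n)
  filter_upwards [hT, ae_eventually_le_mul_rpow hTmeas hp0 hp1 hTgeom hθ₀ (half_pos hζ0)]
    with ω hT1 hT_le
  have hQ : ∀ k, Qmat m U T k ω ∈ doublyStochastic ℝ (Fin m) := fun k => by
    rw [Qmat_eq hU']; exact transitionMatrix_mem_doublyStochastic (expI_mem_unitary hG _)
  have hW : ∀ t, Wmat m U T t ω ∈ doublyStochastic ℝ (Fin m) := fun t => by
    rw [Wmat_eq hU']; exact transitionMatrix_mem_doublyStochastic (expI_mem_unitary hG _)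
  have hsum := not_summable_minEntry_Qmat hζ0 hζ1 hU' hc hlow hT1 hT_le
  have hsum_s : ¬Summable fun k => minEntry (Qmat m U T (s + k) ω) := by
    simpa only [add_comm s] using (summable_nat_add_iff s).not.2 hsum
  have hlim := tendsto_listProd_mul_of_not_summable (fun k => hQ (s + k)) hsum_s hW
    ((tendsto_sub_atTop_nat s).comp (tendsto_ntT hT1))
  rwa [Fintype.card_fin] at hlim

/-- almost sure ergodicity including the boundary factor: with
`U_n = exp(i n^{−ζ/2} G)`, `|G_{ij}| ≥ ε₀ > 0`, `0 < ζ ≤ 1`, `0 < p ≤ 1`, for every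
`s ≥ 0` the random product `Q_{σ_s} Q_{σ_{s+1}} ⋯ Q_{σ_{n_t−1}} W_{σ_{n_t}}` converges
a.s. as `t → ∞` to the matrix `Π` with all entries `1/m`. -/
theorem stmt14 (m : ℕ) (G : Matrix (Fin m) (Fin m) ℂ) (hG : G.IsHermitian)
    (ε₀ : ℝ) (hε₀ : 0 < ε₀) (hGlow : ∀ i j, ε₀ ≤ ‖G i j‖)
    (ζ : ℝ) (hζ0 : 0 < ζ) (hζ1 : ζ ≤ 1)
    (p : ℝ) (hp0 : 0 < p) (hp1 : p ≤ 1)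
    (U : ℕ → Matrix (Fin m) (Fin m) ℂ)
    (hU : ∀ n : ℕ, U n =
      NormedSpace.exp ((Complex.I * (((n : ℝ) ^ (-(ζ / 2)) : ℝ) : ℂ)) • G))
    {Ω : Type*} [MeasureSpace Ω] [IsProbabilityMeasure (ℙ : Measure Ω)]
    (T : ℕ → Ω → ℕ) (hTmeas : ∀ n, Measurable (T n))
    (hTindep : iIndepFun T ℙ)
    (hTgeom : ∀ n k, 1 ≤ k →
      (ℙ {ω | T n ω = k} : ENNReal) = ENNReal.ofReal (p * (1 - p) ^ (k - 1)))
    (s : ℕ) :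
    ∀ᵐ ω ∂(ℙ : Measure Ω),
      Tendsto (fun t =>
          (((List.range (ntT T t ω - s)).map (fun k => Qmat m U T (s + k) ω)).prod *
            Wmat m U T t ω))
        atTop (nhds (Matrix.of fun _ _ : Fin m => (1 : ℝ) / m)) :=
  stmt14_general m G hG ε₀ hε₀ hGlow ζ hζ0 hζ1 p hp0 hp1 U hU T hTmeas hTgeom s
end
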